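/- For n ≥ 1 and complex x, ∑_{k=0}^{⌊n/2⌋} (1-q)^{2k} B^{(1)}_{n-2k,α}(-x/2;q)/(2^{2k}[n-2k]_q!(q²;q²)_k(q^{2α+2};q²)_k) = (-1/2)^n H_n(x)/[n]_q!, where H_n(x) = ∑_{j=0}^n [n choose j]_q x^j. -/

import Mathlib

/-!
After division by `[m]_q!`, `B^{(1)}_{m,α}(y)` becomes the Cauchy convolution of `y^j/[j]_q!`
with `β_j/[j]_q!`. The left side is then a triple convolution whose middle factor is the
even-indexed weight sequence of the recursion; reassociating it, the recursion turns the inner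
sum into `(-1/2)^m/[m]_q!`, and the convolution of that with `(-x/2)^j/[j]_q!` is
`(-1/2)^n H_n(x)/[n]_q!`.
-/

/-- The q-shifted factorial `(a;q)_n`. -/
noncomputable def qPoch (a q : ℂ) (n : ℕ) : ℂ := ∏ k ∈ Finset.range n, (1 - a * q ^ k)

/-- The q-factorial `[n]_q!`. -/
noncomputable def qFact (q : ℂ) (n : ℕ) : ℂ := qPoch q q n / (1 - q) ^ n

/-- The Gaussian binomial coefficient. -/
noncomputable def qBinom (q : ℂ) (n k : ℕ) : ℂ :=
  qPoch q q n / (qPoch q q k * qPoch q q (n - k))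

/-- `β : ℕ → ℂ` is the sequence of generalized q-Bernoulli numbers `β_{n,α}(q)`:
`β_0 = 1` and for `n ≥ 1`,
`∑_{k=0}^{⌊n/2⌋} (1-q)^{2k} β_{n-2k} / (2^{2k} [n-2k]_q! (q²;q²)_k (q^{2α+2};q²)_k)
  = (-1/2)^n / [n]_q!`. -/
def qBetaSpec (q α : ℝ) (β : ℕ → ℂ) : Prop :=
  β 0 = 1 ∧ ∀ n : ℕ, 1 ≤ n →
    ∑ k ∈ Finset.range (n / 2 + 1),
      ((1 : ℂ) - q) ^ (2 * k) * β (n - 2 * k) /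
        (2 ^ (2 * k) * qFact (q : ℂ) (n - 2 * k) *
          qPoch ((q : ℂ) ^ 2) ((q : ℂ) ^ 2) k *
          qPoch (((q ^ (2 * α + 2) : ℝ) : ℂ)) ((q : ℂ) ^ 2) k)
      = (-1 / 2) ^ n / qFact (q : ℂ) n

/-- `B^{(1)}_{n,α}(x;q)`. -/
noncomputable def B1poly (q : ℂ) (c : ℕ → ℂ) (n : ℕ) (x : ℂ) : ℂ :=
  ∑ k ∈ Finset.range (n + 1), qBinom q n k * c (n - k) * x ^ k

/-- Al-Salam's polynomial `H_n(x) = ∑_{j=0}^n [n,j]_q x^j`. -/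
noncomputable def alSalamH (q x : ℂ) (n : ℕ) : ℂ :=
  ∑ j ∈ Finset.range (n + 1), qBinom q n j * x ^ j

open Finset

theorem sum_range_half_mul_convolution {R : Type*} [CommSemiring R] (w a b r : ℕ → R)
    (h : ∀ m, ∑ k ∈ range (m / 2 + 1), w k * b (m - 2 * k) = r m) (n : ℕ) :
    ∑ k ∈ range (n / 2 + 1), w k * ∑ j ∈ range (n - 2 * k + 1), a j * b (n - 2 * k - j) =
      ∑ j ∈ range (n + 1), a j * r (n - j) := by
  simp_rw [← h, mul_sum]
  refine sum_comm' (fun k j => ?_) |>.trans (sum_congr rfl fun j _ => sum_congr rfl fun k _ => ?_)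
  · simp only [mem_range]
    omega
  · rw [Nat.sub_right_comm]
    ring

theorem qPoch_ne_zero {a q : ℂ} (ha : ‖a‖ < 1) (hq : ‖q‖ ≤ 1) (m : ℕ) : qPoch a q m ≠ 0 := by
  refine prod_ne_zero_iff.mpr fun k _ h => ?_
  have hlt : ‖a * q ^ k‖ < 1 := by
    rw [norm_mul, norm_pow]
    exact (mul_le_of_le_one_right (norm_nonneg a) (pow_le_one₀ (norm_nonneg q) hq)).trans_lt ha
  rw [← sub_eq_zero.mp h, norm_one] at hlt
  exact lt_irrefl 1 hlt

theorem one_sub_ne_zero_of_norm_lt_one {q : ℂ} (hq : ‖q‖ < 1) : 1 - q ≠ 0 := by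
  intro h
  rw [← sub_eq_zero.mp h, norm_one] at hq
  exact lt_irrefl 1 hq

theorem qFact_ne_zero {q : ℂ} (hq : ‖q‖ < 1) (m : ℕ) : qFact q m ≠ 0 :=
  div_ne_zero (qPoch_ne_zero hq hq.le m) (pow_ne_zero _ (one_sub_ne_zero_of_norm_lt_one hq))

theorem qBinom_eq_qFact_div {q : ℂ} (hq : ‖q‖ < 1) {m j : ℕ} (hj : j ≤ m) :
    qBinom q m j = qFact q m / (qFact q j * qFact q (m - j)) := by
  have hpow : (1 - q) ^ j * (1 - q) ^ (m - j) = (1 - q) ^ m := by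
    rw [← pow_add, Nat.add_sub_cancel' hj]
  have := one_sub_ne_zero_of_norm_lt_one hq
  have := qPoch_ne_zero hq hq.le j
  have := qPoch_ne_zero hq hq.le (m - j)
  unfold qBinom qFact
  field_simp
  rw [← hpow]
  ring

theorem B1poly_div_qFact {q : ℂ} (hq : ‖q‖ < 1) (c : ℕ → ℂ) (m : ℕ) (y : ℂ) :
    B1poly q c m y / qFact q m =
      ∑ j ∈ range (m + 1), y ^ j / qFact q j * (c (m - j) / qFact q (m - j)) := by
  rw [B1poly, sum_div]
  refine sum_congr rfl fun j hj => ?_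
  rw [qBinom_eq_qFact_div hq (Nat.lt_succ_iff.mp (mem_range.mp hj))]
  have := qFact_ne_zero hq m
  field_simp

theorem B1poly_pow_mul (q t x : ℂ) (n : ℕ) :
    B1poly q (fun m => t ^ m) n (t * x) = t ^ n * alSalamH q x n := by
  rw [B1poly, alSalamH, mul_sum]
  refine sum_congr rfl fun j hj => ?_
  rw [← pow_sub_mul_pow t (Nat.lt_succ_iff.mp (mem_range.mp hj))]
  ring

theorem qBetaSpec.sum_eq {q α : ℝ} {β : ℕ → ℂ} (hβ : qBetaSpec q α β) (m : ℕ) :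
    ∑ k ∈ range (m / 2 + 1),
      ((1 : ℂ) - q) ^ (2 * k) * β (m - 2 * k) /
        (2 ^ (2 * k) * qFact (q : ℂ) (m - 2 * k) *
          qPoch ((q : ℂ) ^ 2) ((q : ℂ) ^ 2) k *
          qPoch (((q ^ (2 * α + 2) : ℝ) : ℂ)) ((q : ℂ) ^ 2) k)
      = (-1 / 2) ^ m / qFact (q : ℂ) m := by
  rcases Nat.eq_zero_or_pos m with rfl | hm
  · simp [qFact, qPoch, hβ.1]
  · exact hβ.2 m hm

theorem stmt15_general (q α : ℝ) (hq : 0 < q) (hq1 : q < 1)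
    (β : ℕ → ℂ) (hβ : qBetaSpec q α β) :
    ∀ n : ℕ, 1 ≤ n → ∀ x : ℂ,
      ∑ k ∈ Finset.range (n / 2 + 1),
        ((1 : ℂ) - q) ^ (2 * k) * B1poly (q : ℂ) β (n - 2 * k) (-x / 2) /
          (2 ^ (2 * k) * qFact (q : ℂ) (n - 2 * k) *
            qPoch ((q : ℂ) ^ 2) ((q : ℂ) ^ 2) k *
            qPoch (((q ^ (2 * α + 2) : ℝ) : ℂ)) ((q : ℂ) ^ 2) k)
        = (-1 / 2) ^ n * alSalamH (q : ℂ) x n / qFact (q : ℂ) n := by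
  intro n _ x
  have hq' : ‖(q : ℂ)‖ < 1 := by rwa [Complex.norm_real, Real.norm_of_nonneg hq.le]
  set w : ℕ → ℂ := fun k => ((1 : ℂ) - q) ^ (2 * k) /
    (2 ^ (2 * k) * qPoch ((q : ℂ) ^ 2) ((q : ℂ) ^ 2) k *
      qPoch (((q ^ (2 * α + 2) : ℝ) : ℂ)) ((q : ℂ) ^ 2) k)
  have hrec : ∀ m, ∑ k ∈ range (m / 2 + 1), w k * (β (m - 2 * k) / qFact q (m - 2 * k)) =
      (-1 / 2) ^ m / qFact q m := fun m => by
    rw [← hβ.sum_eq m]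
    exact sum_congr rfl fun k _ => by ring
  calc _ = ∑ k ∈ range (n / 2 + 1), w k * (B1poly q β (n - 2 * k) (-x / 2) / qFact q (n - 2 * k)) :=
        sum_congr rfl fun k _ => by ring
    _ = ∑ j ∈ range (n + 1), (-x / 2) ^ j / qFact q j * ((-1 / 2) ^ (n - j) / qFact q (n - j)) := by
        simp_rw [B1poly_div_qFact hq']
        exact sum_range_half_mul_convolution w (fun j => (-x / 2) ^ j / qFact q j)
          (fun m => β m / qFact q m) (fun m => (-1 / 2) ^ m / qFact q m) hrec n
    _ = B1poly q (fun m => (-1 / 2) ^ m) n (-1 / 2 * x) / qFact q n := by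
        rw [B1poly_div_qFact hq']
        exact sum_congr rfl fun j _ => by ring
    _ = _ := by rw [B1poly_pow_mul]

/-- For `n ≥ 1` and complex `x`,
`∑_{k=0}^{⌊n/2⌋} (1-q)^{2k} B^{(1)}_{n-2k,α}(-x/2;q) /
  (2^{2k}[n-2k]_q!(q²;q²)_k(q^{2α+2};q²)_k) = (-1/2)^n H_n(x)/[n]_q!`. -/
theorem stmt15 (q α : ℝ) (hq : 0 < q) (hq1 : q < 1) (hα : -1 < α)
    (β : ℕ → ℂ) (hβ : qBetaSpec q α β) :
    ∀ n : ℕ, 1 ≤ n → ∀ x : ℂ,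
      ∑ k ∈ Finset.range (n / 2 + 1),
        ((1 : ℂ) - q) ^ (2 * k) * B1poly (q : ℂ) β (n - 2 * k) (-x / 2) /
          (2 ^ (2 * k) * qFact (q : ℂ) (n - 2 * k) *
            qPoch ((q : ℂ) ^ 2) ((q : ℂ) ^ 2) k *
            qPoch (((q ^ (2 * α + 2) : ℝ) : ℂ)) ((q : ℂ) ^ 2) k)
        = (-1 / 2) ^ n * alSalamH (q : ℂ) x n / qFact (q : ℂ) n :=
  stmt15_general q α hq hq1 β hβ
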